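/- In the proof of the global-consequence reduction: suppose M is a model on F_h ×^δ F_v with M, (r_h, r_v) ⊨ univ^δ, where univ^δ := □_h◇_v δ ∧ □_h□_h◇_v δ ∧ □_v◇_h δ ∧ □_v□_v◇_h δ, and suppose r_h R_h x_h and r_v R_v x_v. Then for every point w in the subframe of F_h generated by x_h we have r_h R_h w and r_v R_v w (and symmetrically for the subframe of F_v generated by x_v). -/
import Mathlib


/-- Formulas of the bimodal language with horizontal and vertical boxes
and the diagonal constant `δ`. -/
inductive Fml (P : Type*) where
  | var : P → Fml P
  | delta : Fml P
  | neg : Fml P → Fml P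
  | and : Fml P → Fml P → Fml P
  | boxh : Fml P → Fml P
  | boxv : Fml P → Fml P
  deriving DecidableEq

namespace Fml

variable {P : Type*}

def or (φ ψ : Fml P) : Fml P := .neg (.and (.neg φ) (.neg ψ))
def imp (φ ψ : Fml P) : Fml P := Fml.or (.neg φ) ψ
def diah (φ : Fml P) : Fml P := .neg (.boxh (.neg φ))
def diav (φ : Fml P) : Fml P := .neg (.boxv (.neg φ))
/-- `□_h⁺ φ := φ ∧ □_h φ` -/
def boxhp (φ : Fml P) : Fml P := .and φ (.boxh φ)
/-- `□_v⁺ φ := φ ∧ □_v φ` -/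
def boxvp (φ : Fml P) : Fml P := .and φ (.boxv φ)
/-- `◇_h⁺ φ := φ ∨ ◇_h φ` -/
def diahp (φ : Fml P) : Fml P := Fml.or φ (diah φ)
/-- `◇_v⁺ φ := φ ∨ ◇_v φ` -/
def diavp (φ : Fml P) : Fml P := Fml.or φ (diav φ)

end Fml

/-- Satisfaction in a model based on the δ-product of the frames `(Wh, Rh)` and `(Wv, Rv)`
(frames living inside the ambient type `U`), with valuation `v`.  The diagonal `δ` is
interpreted as `{(x,x) : x ∈ Wh ∩ Wv}`. -/
def dsat {U P : Type*} (Wh Wv : Set U) (Rh Rv : U → U → Prop) (v : P → Set (U × U)) :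
    U × U → Fml P → Prop
  | p, .var q => p ∈ v q
  | p, .delta => p.1 = p.2 ∧ p.1 ∈ Wh ∧ p.1 ∈ Wv
  | p, .neg φ => ¬ dsat Wh Wv Rh Rv v p φ
  | p, .and φ ψ => dsat Wh Wv Rh Rv v p φ ∧ dsat Wh Wv Rh Rv v p ψ
  | p, .boxh φ => ∀ x : U, x ∈ Wh → Rh p.1 x → dsat Wh Wv Rh Rv v (x, p.2) φ
  | p, .boxv φ => ∀ y : U, y ∈ Wv → Rv p.2 y → dsat Wh Wv Rh Rv v (p.1, y) φ

/-- The formula `univ^δ := □_h◇_vδ ∧ □_h□_h◇_vδ ∧ □_v◇_hδ ∧ □_v□_v◇_hδ`. -/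
def univDelta {P : Type*} : Fml P :=
  .and (.boxh (Fml.diav .delta))
    (.and (.boxh (.boxh (Fml.diav .delta)))
      (.and (.boxv (Fml.diah .delta)) (.boxv (.boxv (Fml.diah .delta)))))

/-- If `univ^δ` holds at `(r_h, r_v)` in a model based on a δ-product, `r_h R_h x_h` and
`r_v R_v x_v`, then every point of the subframe of `F_h` generated by `x_h` is both an
`R_h`-successor of `r_h` and an `R_v`-successor of `r_v`; and symmetrically for the
subframe of `F_v` generated by `x_v`. -/
theorem spy_sees_generated_subframes {U P : Type*} (Wh Wv : Set U) (Rh Rv : U → U → Prop)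
    (v : P → Set (U × U)) (rh rv xh xv : U)
    (hrh : rh ∈ Wh) (hrv : rv ∈ Wv) (hxh : xh ∈ Wh) (hxv : xv ∈ Wv)
    (h1 : Rh rh xh) (h2 : Rv rv xv)
    (huniv : dsat Wh Wv Rh Rv v (rh, rv) univDelta) :
    (∀ w : U, Relation.ReflTransGen (fun a b => b ∈ Wh ∧ Rh a b) xh w →
      Rh rh w ∧ Rv rv w) ∧
    (∀ w : U, Relation.ReflTransGen (fun a b => b ∈ Wv ∧ Rv a b) xv w →
      Rh rh w ∧ Rv rv w) := by
  obtain ⟨A, B, C, D⟩ := huniv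
  simp only [dsat, Fml.diav, Fml.diah] at A B C D
  push_neg at A B C D
  -- key facts
  have keyA : ∀ x, x ∈ Wh → Rh rh x → x ∈ Wv ∧ Rv rv x := by
    intro x hx hrx
    obtain ⟨y, hy, hry, heq, _, _⟩ := A x hx hrx
    subst heq; exact ⟨hy, hry⟩
  have keyB : ∀ x, x ∈ Wh → Rh rh x → ∀ x', x' ∈ Wh → Rh x x' → x' ∈ Wv ∧ Rv rv x' := by
    intro x hx hrx x' hx' hxx'
    obtain ⟨y, hy, hry, heq, _, _⟩ := B x hx hrx x' hx' hxx'
    subst heq; exact ⟨hy, hry⟩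
  have keyC : ∀ y, y ∈ Wv → Rv rv y → y ∈ Wh ∧ Rh rh y := by
    intro y hy hry
    obtain ⟨x, hx, hrx, heq, _, _⟩ := C y hy hry
    subst heq; exact ⟨hx, hrx⟩
  have keyD : ∀ y, y ∈ Wv → Rv rv y → ∀ y', y' ∈ Wv → Rv y y' → y' ∈ Wh ∧ Rh rh y' := by
    intro y hy hry y' hy' hyy'
    obtain ⟨x, hx, hrx, heq, _, _⟩ := D y hy hry y' hy' hyy'
    subst heq; exact ⟨hx, hrx⟩
  constructor
  · intro w hw
    have : w ∈ Wh ∧ Rh rh w ∧ Rv rv w := by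
      induction hw with
      | refl => exact ⟨hxh, h1, (keyA xh hxh h1).2⟩
      | tail hbc hstep ih =>
        rename_i b c
        obtain ⟨hbWh, hrb, _⟩ := ih
        obtain ⟨hcWv, hrvc⟩ := keyB b hbWh hrb c hstep.1 hstep.2
        exact ⟨(keyC c hcWv hrvc).1, (keyC c hcWv hrvc).2, hrvc⟩
    exact ⟨this.2.1, this.2.2⟩
  · intro w hw
    have : w ∈ Wv ∧ Rh rh w ∧ Rv rv w := by
      induction hw with
      | refl => exact ⟨hxv, (keyC xv hxv h2).2, h2⟩
      | tail hbc hstep ih =>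
        rename_i b c
        obtain ⟨hbWv, _, hrb⟩ := ih
        obtain ⟨hcWh, hrhc⟩ := keyD b hbWv hrb c hstep.1 hstep.2
        exact ⟨(keyA c hcWh hrhc).1, hrhc, (keyA c hcWh hrhc).2⟩
    exact ⟨this.2.1, this.2.2⟩
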